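/- Let μ be a probability measure on [0,∞) which is not a Dirac measure, let h(s) = ∫₀^∞ s/(s²+u²) dμ(u), and define k(s,t) = (s − t)·(1/h(s) − s + t) for s > 0, t ∈ ℝ. Then for every fixed t > 0, the map s ↦ k(s,t) is a strictly increasing bijection from (t,∞) onto (0,∞). -/

import Mathlib

open MeasureTheory Set

/-!
Write `b_s(u) = s / (s² + u²)`, `p = h(s) = ∫ b_s dμ` and `m = ∫ b_s² dμ`. Differentiating under
the integral gives `s h'(s) = p - 2 s m`, while `p² ≤ m` (Jensen) and `s m ≤ p` (as `s b_s ≤ 1`).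
Together these force `∂ₛ k(s, t) ≥ t > 0` for `s ≥ t`, so `k(·, t)` is strictly increasing on
`[t, ∞)` and vanishes at `t`. Since `h(s) ≤ 1/s`, also `k(s, t) ≥ t (s - t)`, and the intermediate
value theorem gives surjectivity onto `(0, ∞)`.
-/

lemma sq_integral_le_integral_sq {Ω : Type*} [MeasurableSpace Ω] {μ : Measure Ω}
    [IsProbabilityMeasure μ] {X : Ω → ℝ} (hX : MemLp X 2 μ) :
    (∫ ω, X ω ∂μ) ^ 2 ≤ ∫ ω, X ω ^ 2 ∂μ := by
  have := ProbabilityTheory.variance_nonneg X μ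
  rw [ProbabilityTheory.variance_eq_sub hX] at this
  exact sub_nonneg.mp this

lemma surjOn_Ioi_of_le_add_mul_sub {f : ℝ → ℝ} {a c : ℝ} (hc : 0 < c)
    (hf : ContinuousOn f (Ici a)) (hle : ∀ x, a ≤ x → f a + c * (x - a) ≤ f x) :
    SurjOn f (Ioi a) (Ioi (f a)) := by
  intro y (hy : f a < y)
  set x := a + (y - f a) / c
  have hax : a ≤ x := le_add_of_nonneg_right (div_nonneg (sub_nonneg.mpr hy.le) hc.le)
  have hyx : y ≤ f x := by
    have := hle x hax
    rwa [add_sub_cancel_left, mul_div_cancel₀ _ hc.ne', add_sub_cancel] at this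
  obtain ⟨z, hz, rfl⟩ := intermediate_value_Ioc hax (hf.mono Icc_subset_Ici_self) ⟨hy, hyx⟩
  exact ⟨z, hz.1, rfl⟩

section CauchyKernel

variable {s : ℝ}

lemma div_sq_add_sq_le_inv (hs : 0 < s) (u : ℝ) : s / (s ^ 2 + u ^ 2) ≤ s⁻¹ := by
  rw [div_le_iff₀ (by positivity), inv_mul_eq_div, le_div_iff₀ hs]
  nlinarith [sq_nonneg u]

lemma continuous_div_sq_add_sq (hs : s ≠ 0) : Continuous fun u : ℝ => s / (s ^ 2 + u ^ 2) :=
  continuous_const.div (by fun_prop) fun u => by positivity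

lemma memLp_div_sq_add_sq {μ : Measure ℝ} [IsFiniteMeasure μ] (hs : 0 < s) (p : ENNReal) :
    MemLp (fun u => s / (s ^ 2 + u ^ 2)) p μ :=
  .of_bound (continuous_div_sq_add_sq hs.ne').aestronglyMeasurable s⁻¹ <| ae_of_all _ fun u => by
    rw [Real.norm_of_nonneg (by positivity)]
    exact div_sq_add_sq_le_inv hs u

lemma hasDerivAt_div_sq_add_sq (hs : s ≠ 0) (u : ℝ) :
    HasDerivAt (fun x : ℝ => x / (x ^ 2 + u ^ 2)) ((u ^ 2 - s ^ 2) / (s ^ 2 + u ^ 2) ^ 2) s := by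
  have h := (hasDerivAt_id s).div ((hasDerivAt_pow 2 s).add_const (u ^ 2)) (by positivity)
  refine (h : HasDerivAt (fun x : ℝ => x / (x ^ 2 + u ^ 2)) _ s).congr_deriv ?_
  simp only [id, Nat.cast_ofNat]
  ring

lemma abs_sub_sq_div_sq_add_sq_sq_le (hs : s ≠ 0) (u : ℝ) :
    |(u ^ 2 - s ^ 2) / (s ^ 2 + u ^ 2) ^ 2| ≤ (s ^ 2)⁻¹ := by
  have hpos : 0 < s ^ 2 + u ^ 2 := by positivity
  rw [abs_div, abs_of_pos (pow_pos hpos 2), div_le_iff₀ (pow_pos hpos 2), inv_mul_eq_div,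
    le_div_iff₀ (by positivity), sq (s ^ 2 + u ^ 2)]
  have habs : |u ^ 2 - s ^ 2| ≤ s ^ 2 + u ^ 2 :=
    abs_le.mpr ⟨by nlinarith [sq_nonneg u], by nlinarith [sq_nonneg s]⟩
  exact mul_le_mul habs (le_add_of_nonneg_right (sq_nonneg u)) (sq_nonneg s) hpos.le

lemma sub_sq_div_sq_add_sq_sq (hs : s ≠ 0) (u : ℝ) :
    (u ^ 2 - s ^ 2) / (s ^ 2 + u ^ 2) ^ 2 =
      s⁻¹ * (s / (s ^ 2 + u ^ 2)) - 2 * (s / (s ^ 2 + u ^ 2)) ^ 2 := by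
  have : s ^ 2 + u ^ 2 ≠ 0 := by positivity
  field_simp
  ring

end CauchyKernel

/-- `π` times the Poisson integral of `μ` at the point `i s` of the upper half-plane. -/
noncomputable def poissonIntegral (μ : Measure ℝ) (s : ℝ) : ℝ :=
  ∫ u, s / (s ^ 2 + u ^ 2) ∂μ

section PoissonIntegral

variable {μ : Measure ℝ} {s : ℝ}

lemma poissonIntegral_pos [IsFiniteMeasure μ] [NeZero μ] (hs : 0 < s) :
    0 < poissonIntegral μ s := by
  have hsupp : Function.support (fun u : ℝ => s / (s ^ 2 + u ^ 2)) = univ :=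
    eq_univ_of_forall fun u => by simp only [Function.mem_support]; positivity
  rw [poissonIntegral, integral_pos_iff_support_of_nonneg (fun u => by positivity)
    ((memLp_div_sq_add_sq hs 1).integrable le_rfl), hsupp, Measure.measure_univ_pos]
  exact NeZero.ne μ

lemma poissonIntegral_le_inv [IsProbabilityMeasure μ] (hs : 0 < s) :
    poissonIntegral μ s ≤ s⁻¹ := by
  calc poissonIntegral μ s ≤ ∫ _, s⁻¹ ∂μ :=
        integral_mono ((memLp_div_sq_add_sq hs 1).integrable le_rfl) (integrable_const s⁻¹)
          (div_sq_add_sq_le_inv hs)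
    _ = s⁻¹ := by simp

lemma sq_poissonIntegral_le [IsProbabilityMeasure μ] (hs : 0 < s) :
    poissonIntegral μ s ^ 2 ≤ ∫ u, (s / (s ^ 2 + u ^ 2)) ^ 2 ∂μ :=
  sq_integral_le_integral_sq (memLp_div_sq_add_sq hs 2)

lemma mul_integral_sq_le_poissonIntegral [IsFiniteMeasure μ] (hs : 0 < s) :
    s * ∫ u, (s / (s ^ 2 + u ^ 2)) ^ 2 ∂μ ≤ poissonIntegral μ s := by
  rw [← integral_const_mul]
  refine integral_mono ((memLp_div_sq_add_sq hs 2).integrable_sq.const_mul s)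
    ((memLp_div_sq_add_sq hs 1).integrable le_rfl) fun u => ?_
  have hb := div_sq_add_sq_le_inv hs u
  calc s * (s / (s ^ 2 + u ^ 2)) ^ 2 = (s * (s / (s ^ 2 + u ^ 2))) * (s / (s ^ 2 + u ^ 2)) := by
        ring
    _ ≤ 1 * (s / (s ^ 2 + u ^ 2)) := by
        gcongr
        exact mul_inv_cancel₀ hs.ne' ▸ mul_le_mul_of_nonneg_left hb hs.le
    _ = _ := one_mul _

lemma hasDerivAt_poissonIntegral [IsFiniteMeasure μ] (hs : 0 < s) :
    HasDerivAt (poissonIntegral μ)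
      (s⁻¹ * poissonIntegral μ s - 2 * ∫ u, (s / (s ^ 2 + u ^ 2)) ^ 2 ∂μ) s := by
  have hpos : ∀ x ∈ Ioi (s / 2), 0 < x := fun x hx => (half_pos hs).trans hx
  obtain ⟨-, hderiv⟩ := hasDerivAt_integral_of_dominated_loc_of_deriv_le (μ := μ)
    (F := fun x u => x / (x ^ 2 + u ^ 2)) (F' := fun x u => (u ^ 2 - x ^ 2) / (x ^ 2 + u ^ 2) ^ 2)
    (bound := fun _ => ((s / 2) ^ 2)⁻¹) (Ioi_mem_nhds (half_lt_self hs))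
    (.of_forall fun x => (measurable_const.div (by fun_prop)).aestronglyMeasurable)
    ((memLp_div_sq_add_sq hs 1).integrable le_rfl)
    ((Measurable.div (by fun_prop) (by fun_prop)).aestronglyMeasurable)
    (ae_of_all _ fun u x hx => (abs_sub_sq_div_sq_add_sq_sq_le (hpos x hx).ne' u).trans <|
      inv_anti₀ (by positivity) (pow_le_pow_left₀ (half_pos hs).le (le_of_lt hx) 2))
    (integrable_const _)
    (ae_of_all _ fun u x hx => hasDerivAt_div_sq_add_sq (hpos x hx).ne' u)
  refine (hderiv : HasDerivAt (poissonIntegral μ) _ s).congr_deriv ?_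
  simp_rw [sub_sq_div_sq_add_sq_sq hs.ne']
  rw [integral_sub (((memLp_div_sq_add_sq hs 1).integrable le_rfl).const_mul _)
    ((memLp_div_sq_add_sq hs 2).integrable_sq.const_mul _), integral_const_mul,
    integral_const_mul, poissonIntegral]

end PoissonIntegral

noncomputable def poissonK (μ : Measure ℝ) (s t : ℝ) : ℝ :=
  (s - t) * ((poissonIntegral μ s)⁻¹ - s + t)

lemma poissonK_self (μ : Measure ℝ) (t : ℝ) : poissonK μ t t = 0 := by
  rw [poissonK, sub_self, zero_mul]

section PoissonK

variable {μ : Measure ℝ} [IsProbabilityMeasure μ] {s t : ℝ}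

lemma mul_sub_le_poissonK (hs : 0 < s) (hts : t ≤ s) : t * (s - t) ≤ poissonK μ s t := by
  have hinv : s ≤ (poissonIntegral μ s)⁻¹ :=
    le_inv_of_le_inv₀ (poissonIntegral_pos hs) (poissonIntegral_le_inv hs)
  rw [poissonK, mul_comm t]
  exact mul_le_mul_of_nonneg_left (by linarith) (sub_nonneg.mpr hts)

lemma exists_hasDerivAt_poissonK_ge (ht : 0 ≤ t) (hs : 0 < s) (hts : t ≤ s) :
    ∃ d, t ≤ d ∧ HasDerivAt (poissonK μ · t) d s := by
  set p := poissonIntegral μ s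
  set m := ∫ u, (s / (s ^ 2 + u ^ 2)) ^ 2 ∂μ
  have hp : 0 < p := poissonIntegral_pos hs
  have hpm : p ^ 2 ≤ m := sq_poissonIntegral_le hs
  have hmp : s * m ≤ p := mul_integral_sq_le_poissonIntegral hs
  refine ⟨p⁻¹ - s + t + (s - t) * (-(s⁻¹ * p - 2 * m) / p ^ 2 - 1), ?_, ?_⟩
  · -- `s p² (d - t) = (2s - t) s (m - p²) + t (p - s m)`
    have hd : p⁻¹ - s + t + (s - t) * (-(s⁻¹ * p - 2 * m) / p ^ 2 - 1) - t =
        ((2 * s - t) * s * (m - p ^ 2) + t * (p - s * m)) / (s * p ^ 2) := by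
      field_simp
      ring
    refine sub_nonneg.mp (hd ▸ div_nonneg (add_nonneg ?_ ?_) (by positivity))
    · exact mul_nonneg (mul_nonneg (by linarith) hs.le) (sub_nonneg.mpr hpm)
    · exact mul_nonneg ht (sub_nonneg.mpr hmp)
  · have hinv := ((hasDerivAt_poissonIntegral hs).inv hp.ne').sub (hasDerivAt_id s)
    exact ((hasDerivAt_id s).sub_const t).mul (hinv.add_const t) |>.congr_deriv (by simp [p, m])

lemma continuousOn_poissonK (ht : 0 < t) : ContinuousOn (poissonK μ · t) (Ici t) := fun _ hs =>
  have ⟨_, _, hd⟩ := exists_hasDerivAt_poissonK_ge (μ := μ) ht.le (ht.trans_le hs) hs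
  hd.continuousAt.continuousWithinAt

lemma strictMonoOn_poissonK (ht : 0 < t) : StrictMonoOn (poissonK μ · t) (Ici t) := by
  refine strictMonoOn_of_deriv_pos (convex_Ici t) (continuousOn_poissonK ht) fun s hs => ?_
  rw [interior_Ici] at hs
  obtain ⟨d, htd, hd⟩ := exists_hasDerivAt_poissonK_ge (μ := μ) ht.le (ht.trans hs) hs.le
  rw [hd.deriv]
  exact ht.trans_le htd

lemma bijOn_poissonK (ht : 0 < t) : BijOn (poissonK μ · t) (Ioi t) (Ioi 0) := by
  refine ⟨fun s (hs : t < s) => ?_, ?_, ?_⟩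
  · exact (mul_pos ht (sub_pos.mpr hs)).trans_le (mul_sub_le_poissonK (ht.trans hs) hs.le)
  · exact ((strictMonoOn_poissonK ht).mono Ioi_subset_Ici_self).injOn
  · have := surjOn_Ioi_of_le_add_mul_sub ht (continuousOn_poissonK ht) fun s hts => by
      simpa [poissonK_self] using mul_sub_le_poissonK (μ := μ) (ht.trans_le hts) hts
    rwa [poissonK_self] at this

end PoissonK

theorem stmt5_general (μ : Measure ℝ) [IsProbabilityMeasure μ]
    (h : ℝ → ℝ) (hdef : ∀ s : ℝ, h s = ∫ u, s / (s ^ 2 + u ^ 2) ∂μ)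
    (k : ℝ → ℝ → ℝ) (kdef : ∀ s t : ℝ, k s t = (s - t) * (1 / h s - s + t))
    (t : ℝ) (ht : 0 < t) :
    StrictMonoOn (fun s => k s t) (Ioi t) ∧
      Set.BijOn (fun s => k s t) (Ioi t) (Ioi 0) := by
  have hk : (fun s => k s t) = (poissonK μ · t) := by
    funext s
    rw [kdef, hdef, one_div]
    rfl
  rw [hk]
  exact ⟨(strictMonoOn_poissonK ht).mono Ioi_subset_Ici_self, bijOn_poissonK ht⟩

theorem stmt5 (μ : Measure ℝ) [IsProbabilityMeasure μ] (hμ : μ (Iio 0) = 0)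
    (hnd : ∀ c : ℝ, μ ≠ Measure.dirac c)
    (h : ℝ → ℝ) (hdef : ∀ s : ℝ, h s = ∫ u, s / (s ^ 2 + u ^ 2) ∂μ)
    (k : ℝ → ℝ → ℝ) (kdef : ∀ s t : ℝ, k s t = (s - t) * (1 / h s - s + t))
    (t : ℝ) (ht : 0 < t) :
    StrictMonoOn (fun s => k s t) (Ioi t) ∧
      Set.BijOn (fun s => k s t) (Ioi t) (Ioi 0) :=
  stmt5_general μ h hdef k kdef t ht
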